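/- Let X be a Banach space, V ⊂ X a closed subspace of finite codimension m, and T : X → Y bounded linear. Then for every k > m there is a constant C depending only on k and m such that D_k(T) ≤ C · D_m(T) · D_{k−m}(T|_V). -/

import Mathlib

/-- `Vol(x_1,…,x_k) = ‖x_1‖ ∏_{i≥2} d(x_i, span{x_j : j < i})`; note that the distance of
`x 0` to the span of the empty family is `‖x 0‖`. -/
noncomputable def Vol {Y : Type*} [NormedAddCommGroup Y] [NormedSpace ℝ Y]
    {k : ℕ} (x : Fin k → Y) : ℝ :=
  ∏ i : Fin k, Metric.infDist (x i) (Submodule.span ℝ (x '' {j | j < i}) : Set Y)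

/-- `D_k(T) = sup { Vol(Tx_1,…,Tx_k) : ‖x_i‖ = 1 }`. -/
noncomputable def Dk {X Y : Type*} [NormedAddCommGroup X] [NormedSpace ℝ X]
    [NormedAddCommGroup Y] [NormedSpace ℝ Y] (k : ℕ) (T : X →L[ℝ] Y) : ℝ :=
  sSup {v : ℝ | ∃ x : Fin k → X, (∀ i, ‖x i‖ = 1) ∧ v = Vol (fun i => T (x i))}

/-!
Fix unit vectors `x₁, …, x_k`. In the `m`-dimensional quotient `X ⧸ V`, choose among the images
of the `xᵢ` a family of maximal determinant: by Cramer's rule every image is a combination of at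
most `m` chosen ones with coefficients of modulus `≤ 1`, so `xᵢ = vᵢ + (combination of chosen
x's)` with `vᵢ ∈ V` and `‖vᵢ‖ ≤ 1 + m`. Swapping two adjacent vectors changes `Vol` by a factor at
most `2`, so at the cost of `2 ^ (k * k)` the `m` chosen indices may be put first. `Vol` then
splits into the volume of the first `m` images, at most `D_m(T)`, times the volume of the others
modulo the span of the first ones; the latter does not change when `T xᵢ` is replaced by `T vᵢ`,
which bounds it by `(1 + m) ^ (k - m) D_{k-m}(T|_V)`.
-/

open Metric Submodule

section Distance

variable {Y : Type*} [NormedAddCommGroup Y] [NormedSpace ℝ Y]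

lemma infDist_eq_norm_quotient_mk (M : Submodule ℝ Y) (y : Y) :
    infDist y M = ‖(Submodule.Quotient.mk y : Y ⧸ M)‖ :=
  (QuotientAddGroup.norm_mk (S := M.toAddSubgroup) y).symm

lemma infDist_add_of_mem {M : Submodule ℝ Y} {z : Y} (hz : z ∈ M) (y : Y) :
    infDist (y + z) M = infDist y M := by
  simp [infDist_eq_norm_quotient_mk, (Submodule.Quotient.mk_eq_zero M).2 hz]

lemma infDist_smul (M : Submodule ℝ Y) (c : ℝ) (y : Y) :
    infDist (c • y) M = |c| * infDist y M := by
  simp [infDist_eq_norm_quotient_mk, norm_smul]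

lemma infDist_le_infDist_of_le (y : Y) {F G : Submodule ℝ Y} (h : F ≤ G) :
    infDist y G ≤ infDist y F :=
  infDist_le_infDist_of_subset h ⟨0, F.zero_mem⟩

lemma infDist_mul_infDist_sup_le (F : Submodule ℝ Y) (a b : Y) :
    infDist a F * infDist b ↑(F ⊔ span ℝ {a}) ≤
      2 * (infDist b F * infDist a ↑(F ⊔ span ℝ {b})) := by
  set A := infDist a F
  set B := infDist b ↑(F ⊔ span ℝ {a})
  set A' := infDist b F
  have hBA' : B ≤ A' := infDist_le_infDist_of_le b le_sup_left
  have hB0 : 0 ≤ B := infDist_nonneg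
  have key : ∀ y ∈ F ⊔ span ℝ {b}, A * B ≤ 2 * A' * dist a y := by
    intro y hy
    obtain ⟨f, hf, _, ht, rfl⟩ := mem_sup.1 hy
    obtain ⟨t, rfl⟩ := mem_span_singleton.1 ht
    have hA : A ≤ dist a (f + t • b) + |t| * A' := by
      calc A ≤ infDist (f + t • b) F + dist a (f + t • b) := infDist_le_infDist_add_dist
        _ = dist a (f + t • b) + |t| * A' := by
          rw [add_comm f, infDist_add_of_mem hf, infDist_smul, add_comm]
    have hB : |t| * B ≤ dist a (f + t • b) := by
      have hmem : a - f ∈ F ⊔ span ℝ {a} :=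
        sub_mem (mem_sup_right (mem_span_singleton_self a)) (mem_sup_left hf)
      calc |t| * B = infDist (t • b) ↑(F ⊔ span ℝ {a}) := (infDist_smul _ _ _).symm
        _ ≤ dist (t • b) (a - f) := infDist_le_dist_of_mem hmem
        _ = dist a (f + t • b) := by rw [dist_comm, dist_eq_norm, dist_eq_norm, sub_sub]
    -- `A B ≤ (‖a - y‖ + |t| A') B ≤ ‖a - y‖ A' + A' ‖a - y‖`
    nlinarith [mul_le_mul_of_nonneg_right hA hB0,
      mul_le_mul_of_nonneg_left hBA' (dist_nonneg (x := a) (y := f + t • b)),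
      mul_le_mul_of_nonneg_left hB (infDist_nonneg : 0 ≤ A')]
  rcases (infDist_nonneg : 0 ≤ A').eq_or_lt with hA' | hA'
  · have : B = 0 := le_antisymm (hBA'.trans hA'.ge) hB0
    rw [this, mul_zero]
    exact mul_nonneg zero_le_two (mul_nonneg infDist_nonneg infDist_nonneg)
  have : A * B / (2 * A') ≤ infDist a ↑(F ⊔ span ℝ {b}) :=
    (le_infDist ⟨0, zero_mem _⟩).2 fun y hy =>
      (div_le_iff₀ (by positivity)).2 (by linarith [key y hy])
  rw [div_le_iff₀ (by positivity)] at this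
  linarith

end Distance

section RelVol

variable {Y : Type*} [NormedAddCommGroup Y] [NormedSpace ℝ Y]

/-- `Vol` of the images of `l` in `Y ⧸ F`; lists make reorderings and concatenations easy to
state. -/
noncomputable def relVol (F : Submodule ℝ Y) : List Y → ℝ
  | [] => 1
  | a :: l => infDist a F * relVol (F ⊔ span ℝ {a}) l

@[simp] lemma relVol_nil (F : Submodule ℝ Y) : relVol F [] = 1 := rfl

lemma relVol_cons (F : Submodule ℝ Y) (a : Y) (l : List Y) :
    relVol F (a :: l) = infDist a F * relVol (F ⊔ span ℝ {a}) l := rfl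

lemma relVol_nonneg (F : Submodule ℝ Y) (l : List Y) : 0 ≤ relVol F l := by
  induction l generalizing F with
  | nil => exact zero_le_one
  | cons a l ih => exact mul_nonneg infDist_nonneg (ih _)

lemma relVol_append (F : Submodule ℝ Y) (p q : List Y) :
    relVol F (p ++ q) = relVol F p * relVol (F ⊔ span ℝ {y | y ∈ p}) q := by
  induction p generalizing F with
  | nil => simp
  | cons a p ih =>
    have hset : insert a {y | y ∈ p} = {y | y ∈ a :: p} := by ext; simp
    rw [List.cons_append, relVol_cons, relVol_cons, ih, mul_assoc, sup_assoc, ← span_insert, hset]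

lemma relVol_ofFn (F : Submodule ℝ Y) {n : ℕ} (x : Fin n → Y) :
    relVol F (List.ofFn x) = ∏ i, infDist (x i) ↑(F ⊔ span ℝ (x '' {j | j < i})) := by
  induction n generalizing F with
  | zero => simp
  | succ n ih =>
    have himage (i : Fin n) :
        x '' {j | j < i.succ} = insert (x 0) ((x ∘ Fin.succ) '' {j | j < i}) := by
      ext y
      constructor
      · rintro ⟨j, hj, rfl⟩
        cases j using Fin.cases with
        | zero => exact Set.mem_insert _ _
        | succ j => exact Set.mem_insert_of_mem _ ⟨j, Fin.succ_lt_succ_iff.1 hj, rfl⟩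
      · rintro (rfl | ⟨j, hj, rfl⟩)
        · exact ⟨0, Fin.succ_pos i, rfl⟩
        · exact ⟨j.succ, Fin.succ_lt_succ_iff.2 hj, rfl⟩
    simp only [List.ofFn_succ, relVol_cons, ih, Fin.prod_univ_succ, himage, span_insert, sup_assoc]
    simp

lemma relVol_swap (F : Submodule ℝ Y) (a b : Y) (l : List Y) :
    relVol F (a :: b :: l) ≤ 2 * relVol F (b :: a :: l) := by
  simp only [relVol_cons, sup_right_comm F (span ℝ {a}) (span ℝ {b})]
  have := mul_le_mul_of_nonneg_right (infDist_mul_infDist_sup_le F a b)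
    (relVol_nonneg (F ⊔ span ℝ {b} ⊔ span ℝ {a}) l)
  linarith

lemma relVol_append_cons_le (F : Submodule ℝ Y) (a : Y) (l₁ l₂ : List Y) :
    relVol F (l₁ ++ a :: l₂) ≤ 2 ^ l₁.length * relVol F (a :: (l₁ ++ l₂)) := by
  induction l₁ generalizing F with
  | nil => simp
  | cons b l₁ ih =>
    calc relVol F (b :: l₁ ++ a :: l₂)
        = infDist b F * relVol (F ⊔ span ℝ {b}) (l₁ ++ a :: l₂) := rfl
      _ ≤ infDist b F * (2 ^ l₁.length * relVol (F ⊔ span ℝ {b}) (a :: (l₁ ++ l₂))) :=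
        mul_le_mul_of_nonneg_left (ih _) infDist_nonneg
      _ = 2 ^ l₁.length * relVol F (b :: a :: (l₁ ++ l₂)) := by simp only [relVol_cons]; ring
      _ ≤ 2 ^ l₁.length * (2 * relVol F (a :: b :: (l₁ ++ l₂))) := by
        gcongr; exact relVol_swap F b a _
      _ = 2 ^ (b :: l₁).length * relVol F (a :: (b :: l₁ ++ l₂)) := by
        rw [List.length_cons, pow_succ, List.cons_append]; ring

lemma relVol_le_of_perm {l l' : List Y} (h : l.Perm l') (F : Submodule ℝ Y) :
    relVol F l ≤ 2 ^ (l.length * l.length) * relVol F l' := by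
  induction l' generalizing l F with
  | nil => simp [h.eq_nil]
  | cons a l' ih =>
    obtain ⟨l₁, l₂, rfl⟩ := List.append_of_mem (h.mem_iff.2 List.mem_cons_self)
    have hperm : (l₁ ++ l₂).Perm l' := (List.perm_middle.symm.trans h).cons_inv
    set n := (l₁ ++ l₂).length
    have hexp : l₁.length + n * n ≤ (l₁ ++ a :: l₂).length * (l₁ ++ a :: l₂).length := by
      simp only [n, List.length_append, List.length_cons]
      nlinarith
    calc relVol F (l₁ ++ a :: l₂)
        ≤ 2 ^ l₁.length * (infDist a F * relVol (F ⊔ span ℝ {a}) (l₁ ++ l₂)) :=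
          relVol_append_cons_le F a l₁ l₂
      _ ≤ 2 ^ l₁.length * (infDist a F * (2 ^ (n * n) * relVol (F ⊔ span ℝ {a}) l')) := by
          gcongr
          · exact infDist_nonneg
          · exact ih hperm _
      _ = 2 ^ (l₁.length + n * n) * relVol F (a :: l') := by rw [relVol_cons, pow_add]; ring
      _ ≤ _ :=
          mul_le_mul_of_nonneg_right (pow_le_pow_right₀ one_le_two hexp) (relVol_nonneg _ _)

lemma relVol_map_le_of_sub_mem {ι : Type*} {G H : Submodule ℝ Y} (hHG : H ≤ G) {f g : ι → Y}
    (hfg : ∀ i, f i - g i ∈ G) (l : List ι) : relVol G (l.map f) ≤ relVol H (l.map g) := by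
  induction l generalizing G H with
  | nil => simp
  | cons i l ih =>
    have hdist : infDist (f i) G = infDist (g i) G := by
      rw [← infDist_add_of_mem (hfg i) (g i), add_sub_cancel]
    have hsup : H ⊔ span ℝ {g i} ≤ G ⊔ span ℝ {f i} := by
      refine sup_le (hHG.trans le_sup_left) ((span_singleton_le_iff_mem _ _).2 ?_)
      rw [← sub_sub_cancel (f i) (g i)]
      exact sub_mem (mem_sup_right (mem_span_singleton_self _)) (mem_sup_left (hfg i))
    rw [List.map_cons, List.map_cons, relVol_cons, relVol_cons, hdist]
    exact mul_le_mul (infDist_le_infDist_of_le _ hHG) (ih hsup fun j => mem_sup_left (hfg j))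
      (relVol_nonneg _ _) infDist_nonneg

end RelVol

section VolDk

variable {X Y : Type*} [NormedAddCommGroup X] [NormedSpace ℝ X]
  [NormedAddCommGroup Y] [NormedSpace ℝ Y]

lemma vol_eq_relVol {n : ℕ} (y : Fin n → Y) : Vol y = relVol ⊥ (List.ofFn y) := by
  simp [Vol, relVol_ofFn]

lemma vol_nonneg {n : ℕ} (y : Fin n → Y) : 0 ≤ Vol y :=
  Finset.prod_nonneg fun _ _ => infDist_nonneg

lemma vol_le_prod_norm {n : ℕ} (y : Fin n → Y) : Vol y ≤ ∏ i, ‖y i‖ :=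
  Finset.prod_le_prod (fun _ _ => infDist_nonneg) fun i _ => by
    simpa using infDist_le_dist_of_mem (x := y i) (zero_mem _)

lemma span_image_smul_eq {ι : Type*} {c : ι → ℝ} (hc : ∀ i, c i ≠ 0) (y : ι → Y)
    (s : Set ι) : span ℝ ((fun i => c i • y i) '' s) = span ℝ (y '' s) := by
  apply le_antisymm <;> rw [span_le] <;> rintro _ ⟨i, hi, rfl⟩
  · exact smul_mem _ _ (subset_span ⟨i, hi, rfl⟩)
  · rw [← inv_smul_smul₀ (hc i) (y i)]
    exact smul_mem _ _ (subset_span ⟨i, hi, rfl⟩)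

lemma vol_smul {n : ℕ} {c : Fin n → ℝ} (hc : ∀ i, c i ≠ 0) (y : Fin n → Y) :
    Vol (fun i => c i • y i) = (∏ i, |c i|) * Vol y := by
  simp only [Vol, ← Finset.prod_mul_distrib, span_image_smul_eq hc, infDist_smul]

lemma dk_nonneg (n : ℕ) (T : X →L[ℝ] Y) : 0 ≤ Dk n T :=
  Real.sSup_nonneg <| by rintro _ ⟨x, -, rfl⟩; exact vol_nonneg _

lemma vol_le_dk {n : ℕ} (T : X →L[ℝ] Y) {x : Fin n → X} (hx : ∀ i, ‖x i‖ = 1) :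
    Vol (fun i => T (x i)) ≤ Dk n T := by
  refine le_csSup ⟨‖T‖ ^ n, ?_⟩ ⟨x, hx, rfl⟩
  rintro _ ⟨x, hx, rfl⟩
  calc Vol (fun i => T (x i)) ≤ ∏ i, ‖T (x i)‖ := vol_le_prod_norm _
    _ ≤ ∏ _i : Fin n, ‖T‖ :=
      Finset.prod_le_prod (fun _ _ => norm_nonneg _) fun i _ => by
        simpa [hx i] using T.le_opNorm (x i)
    _ = ‖T‖ ^ n := by simp

lemma vol_le_prod_norm_mul_dk {n : ℕ} (T : X →L[ℝ] Y) (x : Fin n → X) :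
    Vol (fun i => T (x i)) ≤ (∏ i, ‖x i‖) * Dk n T := by
  by_cases h0 : ∃ i, x i = 0
  · obtain ⟨i, hi⟩ := h0
    have : Vol (fun i => T (x i)) = 0 :=
      Finset.prod_eq_zero (Finset.mem_univ i) (by simp [hi, infDist_zero_of_mem (zero_mem _)])
    rw [this]
    exact mul_nonneg (Finset.prod_nonneg fun _ _ => norm_nonneg _) (dk_nonneg n T)
  push Not at h0
  have hnorm (i : Fin n) : ‖x i‖ ≠ 0 := norm_ne_zero_iff.2 (h0 i)
  calc Vol (fun i => T (x i)) = Vol (fun i => ‖x i‖ • T (‖x i‖⁻¹ • x i)) := by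
        simp only [map_smul, smul_smul, mul_inv_cancel₀ (hnorm _), one_smul]
    _ = (∏ i, ‖x i‖) * Vol (fun i => T (‖x i‖⁻¹ • x i)) := by rw [vol_smul hnorm]; simp
    _ ≤ (∏ i, ‖x i‖) * Dk n T := by
        gcongr
        exact vol_le_dk T fun i => norm_smul_inv_norm (𝕜 := ℝ) (h0 i)

lemma relVol_bot_map_le {ι : Type*} (T : X →L[ℝ] Y) (l : List ι) {x : ι → X} {c : ℝ}
    (hx : ∀ i, ‖x i‖ ≤ c) :
    relVol ⊥ (l.map fun i => T (x i)) ≤ c ^ l.length * Dk l.length T := by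
  rw [← List.ofFn_getElem_eq_map, ← vol_eq_relVol]
  refine (vol_le_prod_norm_mul_dk T _).trans ?_
  gcongr
  · exact dk_nonneg _ T
  · calc ∏ i : Fin l.length, ‖x l[(i : ℕ)]‖ ≤ ∏ _i : Fin l.length, c :=
        Finset.prod_le_prod (fun _ _ => norm_nonneg _) fun i _ => hx _
      _ = c ^ l.length := by simp

end VolDk

section Selection

open Module

variable {W ι : Type*} [AddCommGroup W] [Module ℝ W] [FiniteDimensional ℝ W] [Finite ι]

lemma exists_basis_comp_abs_repr_le_one {q : ι → W} (hq : span ℝ (Set.range q) = ⊤) :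
    ∃ (e : Fin (finrank ℝ W) → ι) (b : Basis (Fin (finrank ℝ W)) ℝ W),
      ⇑b = q ∘ e ∧ ∀ i a, |b.repr (q i) a| ≤ 1 := by
  classical
  set b₀ := finBasis ℝ W
  obtain ⟨e₀, he₀⟩ : ∃ e₀ : Fin (finrank ℝ W) → ι, IsUnit (b₀.det (q ∘ e₀)) := by
    obtain ⟨κ, a, -, hspan, hli⟩ := exists_linearIndependent' ℝ q
    let b : Basis κ ℝ W := Basis.mk hli (by rw [hspan, hq])
    let g : κ ≃ Fin (finrank ℝ W) := b.indexEquiv b₀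
    have hb : q ∘ (a ∘ g.symm) = ⇑(b.reindex g) := by
      ext i
      rw [Basis.reindex_apply, Basis.coe_mk]
      rfl
    exact ⟨a ∘ g.symm, hb ▸ b₀.isUnit_det (b.reindex g)⟩
  -- Maximising `|det|` over all choices of columns makes every Cramer coefficient at most `1`.
  have : Nonempty (Fin (finrank ℝ W) → ι) := ⟨e₀⟩
  obtain ⟨e, he⟩ := Finite.exists_max fun e : Fin (finrank ℝ W) → ι => |b₀.det (q ∘ e)|
  have hdet : 0 < |b₀.det (q ∘ e)| := (abs_pos.2 he₀.ne_zero).trans_le (he e₀)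
  obtain ⟨hli, hsp⟩ := b₀.is_basis_iff_det.2 (isUnit_iff_ne_zero.2 (abs_pos.1 hdet))
  refine ⟨e, Basis.mk hli hsp.ge, Basis.coe_mk _ _, fun i a => ?_⟩
  have hcramer :=
    congrArg (fun f => f (q i)) (b₀.det_smul_mk_coord_eq_det_update hli hsp.ge a)
  simp only [LinearMap.smul_apply, Basis.coord_apply, smul_eq_mul,
    MultilinearMap.toLinearMap_apply] at hcramer
  rw [← Function.comp_update] at hcramer
  refine le_of_mul_le_mul_left ?_ hdet
  rw [← abs_mul, hcramer, mul_one]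
  exact he _

lemma exists_fin_forall_eq_sum_smul_abs_le_one (q : ι → W) :
    ∃ (r : ℕ) (e : Fin r → ι), r ≤ finrank ℝ W ∧
      ∀ i, ∃ μ : Fin r → ℝ, (∀ a, |μ a| ≤ 1) ∧ q i = ∑ a, μ a • q (e a) := by
  set S := span ℝ (Set.range q)
  let q' : ι → S := fun i => ⟨q i, subset_span ⟨i, rfl⟩⟩
  have hq' : span ℝ (Set.range q') = ⊤ := by
    rw [← span_span_coe_preimage]
    congr
    ext ⟨y, hy⟩
    simp [q']
  obtain ⟨e, b, hb, hμ⟩ := exists_basis_comp_abs_repr_le_one hq'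
  refine ⟨_, e, S.finrank_le, fun i => ⟨b.repr (q' i), hμ i, ?_⟩⟩
  simpa [hb, q'] using congrArg Subtype.val (b.sum_repr (q' i)).symm

end Selection

section Codimension

variable {X Y : Type*} [NormedAddCommGroup X] [NormedSpace ℝ X]
  [NormedAddCommGroup Y] [NormedSpace ℝ Y]

lemma exists_finset_sub_mem_span_of_finrank_quotient_le (V : Submodule ℝ X)
    [FiniteDimensional ℝ (X ⧸ V)] {k m : ℕ} (hV : Module.finrank ℝ (X ⧸ V) ≤ m) (hmk : m ≤ k)
    {x : Fin k → X} (hx : ∀ i, ‖x i‖ ≤ 1) :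
    ∃ t : Finset (Fin k), t.card = m ∧ ∃ v : Fin k → V,
      (∀ i, ‖v i‖ ≤ 1 + m) ∧ ∀ i, x i - v i ∈ span ℝ (x '' t) := by
  classical
  obtain ⟨r, e, hr, hrep⟩ := exists_fin_forall_eq_sum_smul_abs_le_one fun i => V.mkQ (x i)
  choose μ hμ hrep using hrep
  obtain ⟨t, hst, -, ht⟩ :=
    Finset.exists_subsuperset_card_eq (Finset.subset_univ (Finset.univ.image e))
      (Finset.card_image_le.trans (by simpa using hr.trans hV)) (by simpa using hmk)
  have hv (i : Fin k) : x i - ∑ a, μ i a • x (e a) ∈ V := by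
    rw [← Submodule.Quotient.mk_eq_zero, ← mkQ_apply, map_sub, map_sum, sub_eq_zero]
    simpa using hrep i
  refine ⟨t, ht, fun i => ⟨_, hv i⟩, fun i => ?_, fun i => ?_⟩
  · calc ‖x i - ∑ a, μ i a • x (e a)‖ ≤ ‖x i‖ + ∑ a, ‖μ i a • x (e a)‖ :=
          (norm_sub_le _ _).trans (add_le_add_right (norm_sum_le _ _) _)
      _ ≤ 1 + ∑ _a : Fin r, (1 : ℝ) := by
          gcongr with a
          · exact hx i
          · simpa [norm_smul] using mul_le_one₀ (hμ i a) (norm_nonneg _) (hx _)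
      _ ≤ 1 + m := by simpa using hr.trans hV
  · simp only [sub_sub_cancel]
    exact sum_mem fun a _ =>
      smul_mem _ _ (subset_span ⟨e a, hst (Finset.mem_image_of_mem e (Finset.mem_univ a)), rfl⟩)

lemma vol_le_of_sub_mem_span (T : X →L[ℝ] Y) (V : Submodule ℝ X) {k : ℕ} {x : Fin k → X}
    (hx : ∀ i, ‖x i‖ ≤ 1) (t : Finset (Fin k)) {v : Fin k → V} {c : ℝ}
    (hv : ∀ i, ‖v i‖ ≤ c) (hxv : ∀ i, x i - v i ∈ span ℝ (x '' t)) :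
    Vol (fun i => T (x i)) ≤ 2 ^ (k * k) * Dk t.card T *
      (c ^ (k - t.card) * Dk (k - t.card) (T.comp V.subtypeL)) := by
  classical
  set Tx : Fin k → Y := fun i => T (x i)
  set G := span ℝ (Tx '' t)
  have hperm : (List.finRange k).Perm (t.toList ++ tᶜ.toList) :=
    (List.perm_ext_iff_of_nodup (List.nodup_finRange k) (t.nodup_toList.append tᶜ.nodup_toList
      (List.disjoint_left.2 fun ha hb => by simp_all))).2 fun i => by simp [em]
  have hG (i : Fin k) : Tx i - T (v i) ∈ G := by
    have := apply_mem_span_image_of_mem_span (T : X →ₗ[ℝ] Y) (hxv i)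
    simpa [G, Tx, Set.image_image] using this
  calc Vol Tx = relVol ⊥ ((List.finRange k).map Tx) := by
        rw [vol_eq_relVol, List.ofFn_eq_map]
    _ ≤ 2 ^ (k * k) * relVol ⊥ ((t.toList ++ tᶜ.toList).map Tx) := by
        simpa using relVol_le_of_perm (hperm.map Tx) ⊥
    _ = 2 ^ (k * k) * (relVol ⊥ (t.toList.map Tx) * relVol G (tᶜ.toList.map Tx)) := by
        have hset : {y | y ∈ t.toList.map Tx} = Tx '' t := by ext; simp
        rw [List.map_append, relVol_append, bot_sup_eq, hset]
    _ ≤ 2 ^ (k * k) * (Dk t.card T * relVol ⊥ (tᶜ.toList.map fun i => T (v i))) := by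
        refine mul_le_mul_of_nonneg_left (mul_le_mul ?_ ?_ (relVol_nonneg _ _) (dk_nonneg _ T))
          (by positivity)
        · simpa using relVol_bot_map_le T t.toList hx
        · exact relVol_map_le_of_sub_mem bot_le hG _
    _ ≤ _ := by
        rw [← mul_assoc]
        gcongr
        · exact mul_nonneg (by positivity) (dk_nonneg _ T)
        · simpa [Finset.card_compl] using relVol_bot_map_le (T.comp V.subtypeL) tᶜ.toList hv

end Codimension

/-- for any closed subspace `V ⊆ X` of codimension `m` and any `k > m`, there is
a constant `C = C(k,m)` with `D_k(T) ≤ C · D_m(T) · D_{k−m}(T|_V)` for every bounded linear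
`T : X → Y` between Banach spaces. -/
theorem stmt18 (k m : ℕ) (hm : 1 ≤ m) (hkm : m < k) :
    ∃ C : ℝ, 0 < C ∧
      ∀ (X Y : Type) [NormedAddCommGroup X] [NormedSpace ℝ X] [CompleteSpace X]
        [NormedAddCommGroup Y] [NormedSpace ℝ Y] [CompleteSpace Y]
        (T : X →L[ℝ] Y) (V : Submodule ℝ X),
        IsClosed (V : Set X) →
        Module.finrank ℝ (X ⧸ V) = m →
        Dk k T ≤ C * Dk m T * Dk (k - m) (T.comp V.subtypeL) := by
  refine ⟨2 ^ (k * k) * (1 + m) ^ (k - m), by positivity, ?_⟩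
  intro X Y _ _ _ _ _ _ T V _ hcodim
  have : FiniteDimensional ℝ (X ⧸ V) := Module.finite_of_finrank_pos (hcodim ▸ hm)
  refine Real.sSup_le ?_
    (mul_nonneg (mul_nonneg (by positivity) (dk_nonneg m T)) (dk_nonneg _ _))
  rintro _ ⟨x, hx, rfl⟩
  obtain ⟨t, ht, v, hv, hxv⟩ :=
    exists_finset_sub_mem_span_of_finrank_quotient_le V hcodim.le hkm.le fun i => (hx i).le
  have := vol_le_of_sub_mem_span T V (fun i => (hx i).le) t hv hxv
  rw [ht] at this
  exact this.trans_eq (by ring)
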